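/- arXiv:2107.01847 — 4 statements merged into one kernel-verified Lean document; each statement's English description precedes it below -/
import Mathlib

section
/- If $x_1, x_2, x_3$ are the (real) roots of the monic cubic $x^3 + ax^2 + bx + c$, so that $x_1 + x_2 + x_3 = -a$ and $x_1x_2 + x_1x_3 + x_2x_3 = b$, then the common side length of the equilateral triangle with vertices $(x_1,(x_2-x_3)/\sqrt{3})$, $(x_2,(x_3-x_1)/\sqrt{3})$, $(x_3,(x_1-x_2)/\sqrt{3})$ equals $\frac{\sqrt{12}}{3}\sqrt{a^2 - 3b}$. -/
/-! The squared side `(x - y)^2 + ((x + y - 2z)/√3)^2` equals `(4/3)(x² + y² + z² - xy - xz - yz)`,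
a symmetric function of the three coordinates, so all three sides agree; in terms of the
elementary symmetric functions it is `(4/3)((x + y + z)² - 3(xy + xz + yz)) = (4/3)(a² - 3b)`. -/

lemma sq_sub_add_sq_div_sqrt_three (x y z : ℝ) :
    (x - y) ^ 2 + ((y - z) / √3 - (z - x) / √3) ^ 2 =
      4 / 3 * ((x + y + z) ^ 2 - 3 * (x * y + x * z + y * z)) := by
  have h3 : √3 ^ 2 = 3 := Real.sq_sqrt (by norm_num)
  field_simp
  rw [h3]
  ring

lemma sqrt_twelve_div_three_mul_sqrt (t : ℝ) : √12 / 3 * √t = √(4 / 3 * t) := by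
  rw [show (12 : ℝ) = 4 / 3 * 3 ^ 2 by norm_num, Real.sqrt_mul (by norm_num),
    Real.sqrt_sq (by norm_num), Real.sqrt_mul (by norm_num : (0 : ℝ) ≤ 4 / 3)]
  ring

theorem stmt_6 (a b x₁ x₂ x₃ : ℝ)
    (hsum : x₁ + x₂ + x₃ = -a)
    (hprod : x₁*x₂ + x₁*x₃ + x₂*x₃ = b) :
    let d : ℝ × ℝ → ℝ × ℝ → ℝ := fun P Q => Real.sqrt ((P.1 - Q.1)^2 + (P.2 - Q.2)^2)
    let P : ℝ × ℝ := (x₁, (x₂ - x₃)/Real.sqrt 3)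
    let Q : ℝ × ℝ := (x₂, (x₃ - x₁)/Real.sqrt 3)
    let R : ℝ × ℝ := (x₃, (x₁ - x₂)/Real.sqrt 3)
    d P Q = (Real.sqrt 12 / 3) * Real.sqrt (a^2 - 3*b) ∧
    d Q R = (Real.sqrt 12 / 3) * Real.sqrt (a^2 - 3*b) ∧
    d R P = (Real.sqrt 12 / 3) * Real.sqrt (a^2 - 3*b) := by
  intro d P Q R
  have side : ∀ x y z : ℝ, x + y + z = -a → x * y + x * z + y * z = b →
      √((x - y) ^ 2 + ((y - z) / √3 - (z - x) / √3) ^ 2) = √12 / 3 * √(a ^ 2 - 3 * b) := by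
    intro x y z hs hp
    rw [sq_sub_add_sq_div_sqrt_three, hs, hp, neg_sq, sqrt_twelve_div_three_mul_sqrt]
  exact ⟨side _ _ _ hsum hprod, side _ _ _ (by linarith) (by linarith),
    side _ _ _ (by linarith) (by linarith)⟩
end

section
/- If $b < a^2/3$ and $c < c_2 = -\frac{2}{27}a^3 + \frac{1}{3}ab - \frac{2}{27}\sqrt{(a^2-3b)^3}$, then every real root $x$ of $x^3 + ax^2 + bx + c$ satisfies $x > -a/3 + \frac{2}{3}\sqrt{a^2-3b}$. -/
/-!
Put `s = √(a² - 3b)`, so that the critical points of `p x = x³ + a x² + b x + c` are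
`(-a ± s)/3`. Then
`27 p x = (27 c + 2 a³ - 9 a b + 2 s³) + (3x + a + s)² (3x + a - 2 s)`,
and the hypothesis on `c` says exactly that the constant term is negative. For
`3x + a ≤ 2 s` the second term is `≤ 0` as well, so `p x < 0` and `x` is no root.
-/

lemma Real.sqrt_pow_three {t : ℝ} (ht : 0 ≤ t) : √(t ^ 3) = √t ^ 3 := by
  conv_lhs => rw [← Real.sq_sqrt ht, ← pow_mul, mul_comm, pow_mul]
  exact Real.sqrt_sq (by positivity)

lemma cubic_mul_27_eq {a b c s : ℝ} (hs : s ^ 2 = a ^ 2 - 3 * b) (x : ℝ) :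
    27 * (x ^ 3 + a * x ^ 2 + b * x + c) =
      (27 * c + 2 * a ^ 3 - 9 * a * b + 2 * s ^ 3) + (3 * x + a + s) ^ 2 * (3 * x + a - 2 * s) := by
  linear_combination (9 * x + 3 * a) * hs

lemma cubic_neg_of_le {a b c s x : ℝ} (hs : s ^ 2 = a ^ 2 - 3 * b)
    (hc : 27 * c + 2 * a ^ 3 - 9 * a * b + 2 * s ^ 3 < 0) (hx : 3 * x + a ≤ 2 * s) :
    x ^ 3 + a * x ^ 2 + b * x + c < 0 := by
  have hfactor : (3 * x + a + s) ^ 2 * (3 * x + a - 2 * s) ≤ 0 :=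
    mul_nonpos_of_nonneg_of_nonpos (sq_nonneg _) (by linarith)
  linarith [cubic_mul_27_eq (c := c) hs x]

theorem stmt_13 (a b c : ℝ) (hb : b < a^2/3)
    (hc : c < -(2/27)*a^3 + (1/3)*a*b - (2/27)*Real.sqrt ((a^2-3*b)^3)) :
    ∀ x : ℝ, x^3 + a*x^2 + b*x + c = 0 →
      x > -a/3 + (2/3)*Real.sqrt (a^2-3*b) := by
  intro x hroot
  by_contra! hx
  have hD : 0 ≤ a ^ 2 - 3 * b := by linarith
  rw [Real.sqrt_pow_three hD] at hc
  have hneg : x ^ 3 + a * x ^ 2 + b * x + c < 0 :=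
    cubic_neg_of_le (Real.sq_sqrt hD) (by linarith) (by linarith)
  linarith
end

section
/- If $b < a^2/3$ and $c > c_1 = -\frac{2}{27}a^3 + \frac{1}{3}ab + \frac{2}{27}\sqrt{(a^2-3b)^3}$, then every real root $x$ of $x^3 + ax^2 + bx + c$ satisfies $x < -a/3 - \frac{2}{3}\sqrt{a^2-3b}$. -/
/-! Shifting to `y = x + a/3` and writing `s = √(a² - 3b)`, the cubic becomes
`(y - s/3)² (y + 2s/3) + (c - c₁)`, so it is at least `c - c₁ > 0` wherever `y ≥ -2s/3`. -/

lemma Real.sqrt_pow_eq_pow_sqrt {t : ℝ} (ht : 0 ≤ t) (n : ℕ) : √(t ^ n) = √t ^ n := by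
  rw [show t ^ n = (√t ^ n) ^ 2 by rw [← pow_mul, mul_comm, pow_mul, Real.sq_sqrt ht]]
  exact Real.sqrt_sq (by positivity)

lemma cubic_eq_sq_mul_add {a b s : ℝ} (hs : s ^ 2 = a ^ 2 - 3 * b) (c x : ℝ) :
    x ^ 3 + a * x ^ 2 + b * x + c =
      (x + a / 3 - s / 3) ^ 2 * (x + a / 3 + 2 * s / 3) +
        (c - (-(2 / 27) * a ^ 3 + (1 / 3) * a * b + (2 / 27) * s ^ 3)) := by
  linear_combination (x + a / 3) / 3 * hs

lemma cubic_pos_of_ge {a b c s x : ℝ} (hs : s ^ 2 = a ^ 2 - 3 * b)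
    (hc : c > -(2 / 27) * a ^ 3 + (1 / 3) * a * b + (2 / 27) * s ^ 3)
    (hx : -a / 3 - (2 / 3) * s ≤ x) :
    0 < x ^ 3 + a * x ^ 2 + b * x + c := by
  rw [cubic_eq_sq_mul_add hs]
  have hfactor : 0 ≤ (x + a / 3 - s / 3) ^ 2 * (x + a / 3 + 2 * s / 3) :=
    mul_nonneg (sq_nonneg _) (by linarith)
  linarith

theorem stmt_14 (a b c : ℝ) (hb : b < a^2/3)
    (hc : c > -(2/27)*a^3 + (1/3)*a*b + (2/27)*Real.sqrt ((a^2-3*b)^3)) :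
    ∀ x : ℝ, x^3 + a*x^2 + b*x + c = 0 →
      x < -a/3 - (2/3)*Real.sqrt (a^2-3*b) := by
  intro x hroot
  have hd : 0 ≤ a ^ 2 - 3 * b := by linarith
  rw [Real.sqrt_pow_eq_pow_sqrt hd] at hc
  by_contra! hx
  exact (cubic_pos_of_ge (Real.sq_sqrt hd) hc hx).ne' hroot
end

section
/- If $b > a^2/3$, $a \ge 0$, and $c > 0$, then the unique real root $x_1$ of $x^3 + ax^2 + bx + c$ satisfies $\min\{-a, -c/b\} \le x_1 \le \max\{-a, -c/b\}$. -/
/-! The cubic `f x = x^3 + a x^2 + b x + c` is strictly increasing once `a^2 < 3b`, so it has exactly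
one real root. Its values at `-a` and `-c/b` are `c - ab` and `c^2 (ab - c) / b^3`, of opposite signs,
so by the intermediate value theorem the root lies between these two points. -/

open Set

theorem StrictMono.existsUnique_zero_mem_uIcc {α : Type*} [ConditionallyCompleteLinearOrder α]
    [TopologicalSpace α] [OrderTopology α] [DenselyOrdered α] {f : α → ℝ} (hf : StrictMono f)
    (hcont : Continuous f) {p q : α} (h : f p * f q ≤ 0) :
    ∃ x ∈ uIcc p q, f x = 0 ∧ ∀ y, f y = 0 → y = x := by
  have hzero : (0 : ℝ) ∈ uIcc (f p) (f q) := by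
    rcases mul_nonpos_iff.mp h with ⟨hp, hq⟩ | ⟨hp, hq⟩
    · exact mem_uIcc.mpr (Or.inr ⟨hq, hp⟩)
    · exact mem_uIcc.mpr (Or.inl ⟨hp, hq⟩)
  obtain ⟨x, hx, hfx⟩ := intermediate_value_uIcc hcont.continuousOn hzero
  exact ⟨x, hx, hfx, fun y hy => hf.injective (hy.trans hfx.symm)⟩

theorem strictMono_cubic {a b : ℝ} (h : a ^ 2 < 3 * b) (c : ℝ) :
    StrictMono fun x : ℝ => x ^ 3 + a * x ^ 2 + b * x + c := by
  intro x y hxy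
  have hquad : 0 < x ^ 2 + x * y + y ^ 2 + a * (x + y) + b := by
    nlinarith [sq_nonneg (2 * x + y + a), sq_nonneg (3 * y + a)]
  have hdiff : (y ^ 3 + a * y ^ 2 + b * y + c) - (x ^ 3 + a * x ^ 2 + b * x + c)
      = (y - x) * (x ^ 2 + x * y + y ^ 2 + a * (x + y) + b) := by ring
  have := mul_pos (sub_pos.mpr hxy) hquad
  simp only
  linarith

theorem cubic_eval_neg_mul_eval_neg_div {a b : ℝ} (hb : b ≠ 0) (c : ℝ) :
    ((-a) ^ 3 + a * (-a) ^ 2 + b * (-a) + c) * ((-c / b) ^ 3 + a * (-c / b) ^ 2 + b * (-c / b) + c)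
      = -(c ^ 2 * (a * b - c) ^ 2 / b ^ 3) := by
  field_simp
  ring

theorem stmt_18_general (a b c : ℝ) (hb : b > a^2/3) :
    (∃! x : ℝ, x^3 + a*x^2 + b*x + c = 0) ∧
    ∀ x : ℝ, x^3 + a*x^2 + b*x + c = 0 →
      min (-a) (-c/b) ≤ x ∧ x ≤ max (-a) (-c/b) := by
  have hb0 : 0 < b := lt_of_le_of_lt (by positivity) hb
  have hmono := strictMono_cubic (by linarith : a ^ 2 < 3 * b) c
  have hsigns : ((-a) ^ 3 + a * (-a) ^ 2 + b * (-a) + c)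
      * ((-c / b) ^ 3 + a * (-c / b) ^ 2 + b * (-c / b) + c) ≤ 0 := by
    rw [cubic_eval_neg_mul_eval_neg_div hb0.ne' c, neg_nonpos]
    positivity
  obtain ⟨x₀, hx₀, hroot, huniq⟩ :=
    hmono.existsUnique_zero_mem_uIcc (by fun_prop) hsigns
  refine ⟨⟨x₀, hroot, huniq⟩, fun x hx => ?_⟩
  rw [huniq x hx]
  exact hx₀

theorem stmt_18 (a b c : ℝ) (hb : b > a^2/3) (ha : a ≥ 0) (hc : c > 0) :
    (∃! x : ℝ, x^3 + a*x^2 + b*x + c = 0) ∧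
    ∀ x : ℝ, x^3 + a*x^2 + b*x + c = 0 →
      min (-a) (-c/b) ≤ x ∧ x ≤ max (-a) (-c/b) :=
  stmt_18_general a b c hb
end
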